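/- Every flat arc in Î has a finite efficient 0-flat decomposition: there exist finitely many 0-flat arcs γ⁽¹⁾, …, γ⁽ᴺ⁾ forming a 0-flat decomposition of γ which is efficient. -/

import Mathlib

open Set MeasureTheory ENNReal Topology

noncomputable section

namespace Tent

/-- The core interval `I = [0,1]`. -/
def I : Set ℝ := Set.Icc 0 1

/-- The core tent map of slope `s`, `f(x) = min(s·x + 2 − s, s·(1 − x))`. -/
def f (s : ℝ) (x : ℝ) : ℝ := min (s * x + 2 - s) (s * (1 - x))

/-- The critical point `c = 1 − 1/s`. -/
def c (s : ℝ) : ℝ := 1 - 1 / s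

/-- The post-critical set `PC = {c, f(c), f²(c), …}`. -/
def PC (s : ℝ) : Set ℝ := Set.range fun n => (f s)^[n] (c s)

/-- The inverse limit, as a set of sequences: `x_i ∈ I` and `f(x_{i+1}) = x_i`. -/
def IhatSet (s : ℝ) : Set (ℕ → ℝ) :=
  {x | (∀ i, x i ∈ I) ∧ ∀ i, f s (x (i + 1)) = x i}

/-- The inverse limit space `Î`. -/
abbrev Ihat (s : ℝ) : Type := ↥(IhatSet s)

/-- The metric on `Î`: `d(x,y) = Σ_i |x_i − y_i|/2^i`. -/
def dHat (s : ℝ) (x y : Ihat s) : ℝ := ∑' i : ℕ, |x.1 i - y.1 i| / 2 ^ i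

/-- The shift map on sequences: `x ↦ (f(x₀), x₀, x₁, …)`. -/
def fhatSeq (s : ℝ) (x : ℕ → ℝ) : ℕ → ℝ := fun n => Nat.casesOn n (f s (x 0)) fun k => x k

/-- The image under `f̂ⁿ` of a subset of `Î`. -/
def fhatImage (s : ℝ) (n : ℕ) (K : Set (Ihat s)) : Set (Ihat s) :=
  {y : Ihat s | ∃ x ∈ K, y.1 = (fhatSeq s)^[n] (Subtype.val x)}

/-- The inverse `f̂⁻ⁿ` of the shift homeomorphism: drop the first `n` coordinates. -/
def fhatInv (s : ℝ) (n : ℕ) (x : Ihat s) : Ihat s :=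
  ⟨fun i => x.1 (i + n), fun i => x.2.1 (i + n), fun i => by
    show f s (x.1 (i + 1 + n)) = x.1 (i + n)
    rw [show i + 1 + n = i + n + 1 from by omega]
    exact x.2.2 (i + n)⟩

/-- `γ` is an arc in `Î`: homeomorphic to a nontrivial interval of `ℝ`. -/
def IsArc (s : ℝ) (γ : Set (Ihat s)) : Prop :=
  ∃ J : Set ℝ, J.OrdConnected ∧ J.Nontrivial ∧ Nonempty (γ ≃ₜ J)

/-- `γ` is a closed arc in `Î`: homeomorphic to `[0,1]`. -/
def IsClosedArc (s : ℝ) (γ : Set (Ihat s)) : Prop := Nonempty (γ ≃ₜ (Set.Icc (0:ℝ) 1))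

/-- `γ` is an open arc in `Î`: homeomorphic to `(0,1)`. -/
def IsOpenArc (s : ℝ) (γ : Set (Ihat s)) : Prop := Nonempty (γ ≃ₜ (Set.Ioo (0:ℝ) 1))

/-- `x` is an endpoint of the closed arc `γ`. -/
def IsEndpoint (s : ℝ) (x : Ihat s) (γ : Set (Ihat s)) : Prop :=
  ∃ (e : γ ≃ₜ (Set.Icc (0:ℝ) 1)) (hx : x ∈ γ), (e ⟨x, hx⟩).1 = 0 ∨ (e ⟨x, hx⟩).1 = 1

/-- `γ` is `m`-flat over the nontrivial interval `J ⊆ I`: the projection `π_m`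
restricted to `γ` is a homeomorphism onto `J`. -/
def MFlatOver (s : ℝ) (m : ℕ) (γ : Set (Ihat s)) (J : Set ℝ) : Prop :=
  J ⊆ I ∧ J.OrdConnected ∧ J.Nontrivial ∧
    ∃ e : γ ≃ₜ J, ∀ x : γ, (e x).1 = x.1.1 m

/-- `γ` is an `m`-flat arc. -/
def IsMFlat (s : ℝ) (m : ℕ) (γ : Set (Ihat s)) : Prop := ∃ J : Set ℝ, MFlatOver s m γ J

/-- `γ` is a flat arc: `m`-flat for some `m ≥ 0`. -/
def IsFlat (s : ℝ) (γ : Set (Ihat s)) : Prop := ∃ m : ℕ, IsMFlat s m γ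

/-- `γ` is a flat closed arc. -/
def IsFlatClosedArc (s : ℝ) (γ : Set (Ihat s)) : Prop := IsClosedArc s γ ∧ IsFlat s γ

/-- `p 0, …, p k` occur in order along the closed arc `γ` (from one endpoint to the other). -/
def InOrderAlong (s : ℝ) (γ : Set (Ihat s)) (k : ℕ) (p : ℕ → Ihat s) : Prop :=
  ∃ (e : γ ≃ₜ (Set.Icc (0:ℝ) 1)) (t : ℕ → Set.Icc (0:ℝ) 1),
    (∀ i j, i ≤ j → j ≤ k → t i ≤ t j) ∧ ∀ i ≤ k, (e.symm (t i)).1 = p i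

/-- The arclength of a closed arc `γ` in the metric `d`: the supremum over finite
sequences of points occurring in order along `γ` of the sums of successive distances. -/
def arcLength (s : ℝ) (γ : Set (Ihat s)) : ℝ≥0∞ :=
  ⨆ (k : ℕ) (p : ℕ → Ihat s) (_ : InOrderAlong s γ k p),
    ENNReal.ofReal (∑ i ∈ Finset.range k, dHat s (p i) (p (i + 1)))

/-- A continuum: a compact connected subset of `Î` with more than one point. -/
def IsContinuum (s : ℝ) (K : Set (Ihat s)) : Prop :=
  IsCompact K ∧ IsConnected K ∧ K.Nontrivial

/-- `K` is `ε`-dense in `Î`. -/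
def EpsDense (s : ℝ) (ε : ℝ) (K : Set (Ihat s)) : Prop :=
  ∀ x : Ihat s, ∃ y ∈ K, dHat s x y ≤ ε

/-- `S` is metrically infinite: contains flat closed arcs of arbitrarily large length. -/
def MetricallyInfinite (s : ℝ) (S : Set (Ihat s)) : Prop :=
  ∀ N : ℝ, 0 < N → ∃ γ : Set (Ihat s), γ ⊆ S ∧ IsFlatClosedArc s γ ∧
    ENNReal.ofReal N < arcLength s γ

/-- An arc is bi-dense if, for some point `p` in it, both connected components of
`γ ∖ {p}` are dense in `Î`. -/
def BiDense (s : ℝ) (γ : Set (Ihat s)) : Prop :=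
  ∃ p ∈ γ, ∀ q ∈ γ \ {p}, Dense (connectedComponentIn (γ \ {p}) q)

/-- An arc is metrically bi-infinite if, for some point `p` in it, both connected
components of `γ ∖ {p}` are metrically infinite. -/
def MetricallyBiInfinite (s : ℝ) (γ : Set (Ihat s)) : Prop :=
  ∃ p ∈ γ, ∀ q ∈ γ \ {p}, MetricallyInfinite s (connectedComponentIn (γ \ {p}) q)

/-- `x` is globally leaf regular: its path component is a bi-dense, metrically
bi-infinite open arc. -/
def GloballyLeafRegular (s : ℝ) (x : Ihat s) : Prop :=
  IsOpenArc s (pathComponent x) ∧ BiDense s (pathComponent x) ∧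
    MetricallyBiInfinite s (pathComponent x)

/-- A `0`-box over `J`: a union of arcs, each `0`-flat over `J`. -/
def ZeroBoxOver (s : ℝ) (B : Set (Ihat s)) (J : Set ℝ) : Prop :=
  ∃ A : Set (Set (Ihat s)), (∀ γ ∈ A, MFlatOver s 0 γ J) ∧ B = ⋃₀ A

/-- An `m`-box over `J`: `f̂⁻ᵐ(B)` is a `0`-box over `J`. -/
def MBoxOver (s : ℝ) (m : ℕ) (B : Set (Ihat s)) (J : Set ℝ) : Prop :=
  ZeroBoxOver s (fhatInv s m '' B) J

/-- The maximal `m`-box over `J`: the union of all arcs `m`-flat over `J`. -/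
def maximalMBox (s : ℝ) (m : ℕ) (J : Set ℝ) : Set (Ihat s) :=
  ⋃₀ {γ : Set (Ihat s) | MFlatOver s m γ J}

/-- The point cylinder `[y₀, …, y_n]`. -/
def pointCyl (s : ℝ) (y : ℕ → ℝ) (n : ℕ) : Set (Ihat s) :=
  {z : Ihat s | ∀ i ≤ n, z.1 i = y i}

/-- A `0`-flat decomposition of `γ`: a countable collection of `0`-flat arcs,
indexed by an interval `D` of integers, covering `γ`, with consecutive pieces
meeting in a single point (a node) and non-consecutive pieces disjoint. -/
structure ZeroFlatDecomp (s : ℝ) (γ : Set (Ihat s)) where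
  D : Set ℤ
  ordConn : D.OrdConnected
  nonemptyD : D.Nonempty
  piece : ℤ → Set (Ihat s)
  flat : ∀ i ∈ D, IsMFlat s 0 (piece i)
  union : γ = ⋃ i ∈ D, piece i
  node : ∀ i ∈ D, i + 1 ∈ D → ∃ z : Ihat s, piece i ∩ piece (i + 1) = {z}
  disj : ∀ i ∈ D, ∀ j ∈ D, 1 < |i - j| → piece i ∩ piece j = ∅

/-- A `0`-flat decomposition is efficient if every `0`-flat subarc of `γ` is
contained in one of the pieces. -/
def ZeroFlatDecomp.Efficient {s : ℝ} {γ : Set (Ihat s)}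
    (Δ : ZeroFlatDecomp s γ) : Prop :=
  ∀ γ' : Set (Ihat s), γ' ⊆ γ → IsMFlat s 0 γ' → ∃ i ∈ Δ.D, γ' ⊆ Δ.piece i
end Tent

/-!
If `γ` is `m`-flat over `J`, then `π₀ = f^m ∘ π_m` on `γ`. Only finitely many points `t` of `J`
are folds of `f^m`, i.e. satisfy `f^j(t) = c` for some `j < m`; cutting `J` at them leaves finitely
many intervals on each of which `f^m` agrees with a homeomorphism of `ℝ`, so the corresponding
pieces of `γ` are `0`-flat. The decomposition is efficient because `f^{j+1}` attains its maximum
`1` at a fold `t`, so `f^m` is injective on no interval with `t` in its interior, whereas `π₀` is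
injective on a `0`-flat arc.
-/

section Enumeration

variable {X : Type*} [LinearOrder X]

lemma Finset.exists_strictMonoOn_image_Icc_eq {S : Finset X} (hS : S.Nonempty) :
    ∃ b : ℤ → X, StrictMonoOn b (Set.Icc 0 ((S.card : ℤ) - 1)) ∧
      b '' Set.Icc 0 ((S.card : ℤ) - 1) = S := by
  obtain ⟨a, -⟩ := hS
  set e := S.orderEmbOfFin rfl
  set b : ℤ → X := fun i => if h : i.toNat < S.card then e ⟨i.toNat, h⟩ else a
  have hbe : ∀ i : ℤ, ∀ hi : i ∈ Set.Icc 0 ((S.card : ℤ) - 1),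
      b i = e ⟨i.toNat, by rw [Set.mem_Icc] at hi; omega⟩ := fun i hi => dif_pos _
  refine ⟨b, fun i hi j hj hij => ?_, ?_⟩
  · rw [hbe i hi, hbe j hj]
    exact e.strictMono (Fin.mk_lt_mk.2 (by rw [Set.mem_Icc] at hi hj; omega))
  ext x
  rw [← S.range_orderEmbOfFin rfl]
  constructor
  · rintro ⟨i, hi, rfl⟩
    exact hbe i hi ▸ mem_range_self _
  · rintro ⟨n, rfl⟩
    exact ⟨n, ⟨by omega, by omega⟩, by rw [hbe _ ⟨by omega, by omega⟩]; rfl⟩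

lemma exists_strictMonoOn_enumeration {T : Set X} (hT : T.Finite) {a z : X} (haz : a < z)
    (hTaz : T ⊆ Ioo a z) : ∃ M : ℤ, 0 < M ∧ ∃ b : ℤ → X,
      StrictMonoOn b (Icc 0 M) ∧ b 0 = a ∧ b M = z ∧ b '' Ioo 0 M = T := by
  classical
  set S : Finset X := insert a (insert z hT.toFinset)
  have hmemS : ∀ x, x ∈ (S : Set X) ↔ x = a ∨ x = z ∨ x ∈ T := by simp [S]
  have hS : ∀ x ∈ (S : Set X), x ∈ Icc a z := by
    intro x hx
    rcases (hmemS x).1 hx with rfl | rfl | hx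
    exacts [⟨le_rfl, haz.le⟩, ⟨haz.le, le_rfl⟩, Ioo_subset_Icc_self (hTaz hx)]
  have hN : 1 < S.card := Finset.one_lt_card.2 ⟨a, by simp [S], z, by simp [S], haz.ne⟩
  obtain ⟨b, hb, hbS⟩ := Finset.exists_strictMonoOn_image_Icc_eq (S := S) ⟨a, by simp [S]⟩
  set M : ℤ := S.card - 1
  have h0 : (0 : ℤ) ∈ Icc 0 M := ⟨le_rfl, by omega⟩
  have hM : M ∈ Icc 0 M := ⟨by omega, le_rfl⟩
  have hb0 : b 0 = a := by
    obtain ⟨k, hk, hka⟩ := hbS.symm.subset ((hmemS a).2 (Or.inl rfl))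
    exact le_antisymm (hka ▸ hb.monotoneOn h0 hk hk.1) (hS _ (hbS.subset ⟨0, h0, rfl⟩)).1
  have hbM : b M = z := by
    obtain ⟨k, hk, hkz⟩ := hbS.symm.subset ((hmemS z).2 (Or.inr (Or.inl rfl)))
    exact le_antisymm (hS _ (hbS.subset ⟨M, hM, rfl⟩)).2 (hkz ▸ hb.monotoneOn hk hM hk.2)
  refine ⟨M, by omega, b, hb, hb0, hbM, Subset.antisymm ?_ fun t ht => ?_⟩
  · rintro _ ⟨k, hk, rfl⟩
    have hak : a < b k := hb0 ▸ hb h0 (Ioo_subset_Icc_self hk) hk.1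
    have hkz : b k < z := hbM ▸ hb (Ioo_subset_Icc_self hk) hM hk.2
    rcases (hmemS _).1 (hbS.subset ⟨k, Ioo_subset_Icc_self hk, rfl⟩) with h | h | h
    exacts [absurd h hak.ne', absurd h hkz.ne, h]
  · obtain ⟨k, hk, rfl⟩ := hbS.symm.subset ((hmemS t).2 (Or.inr (Or.inr ht)))
    refine ⟨k, ⟨lt_of_le_of_ne hk.1 ?_, lt_of_le_of_ne hk.2 ?_⟩, rfl⟩
    · rintro rfl; exact (hTaz ht).1.ne' hb0
    · rintro rfl; exact (hTaz ht).2.ne hbM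

lemma exists_mem_Ico_subset_Icc {b : ℤ → X} {M : ℤ} (hM : 0 < M) {Q : Set X}
    (hQ : Q ⊆ Icc (b 0) (b M))
    (hgap : ∀ k ∈ Ioo 0 M, ∀ u ∈ Q, ∀ w ∈ Q, u < b k → ¬ b k < w) :
    ∃ i ∈ Ico 0 M, Q ⊆ Icc (b i) (b (i + 1)) := by
  obtain ⟨i, ⟨hi, hiQ⟩, hgreatest⟩ := Int.exists_greatest_of_bdd
    (P := fun i => i ∈ Ico 0 M ∧ ∀ z ∈ Q, b i ≤ z) ⟨M, fun i hi => hi.1.2.le⟩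
    ⟨0, ⟨le_rfl, hM⟩, fun z hz => (hQ hz).1⟩
  refine ⟨i, hi, fun z hz => ⟨hiQ z hz, not_lt.1 fun hz' => ?_⟩⟩
  rcases eq_or_lt_of_le (show i + 1 ≤ M from hi.2) with hiM | hiM
  · exact hz'.not_ge (hiM ▸ (hQ hz).2)
  · obtain ⟨u, hu, hub⟩ : ∃ u ∈ Q, u < b (i + 1) := by
      by_contra! h
      exact (hgreatest (i + 1) ⟨⟨by linarith [hi.1], hiM⟩, h⟩).not_gt (lt_add_one i)
    exact hgap (i + 1) ⟨by linarith [hi.1], hiM⟩ u hu z hz hub hz'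

end Enumeration

namespace Tent

section TentMap

variable {s : ℝ}

lemma mul_c (hs : s ≠ 0) : s * c s = s - 1 := by
  unfold c; field_simp

lemma f_eq_of_le_c (hs : 0 < s) {x : ℝ} (hx : x ≤ c s) : f s x = s * x + (2 - s) := by
  have := mul_c hs.ne'
  unfold f; rw [min_eq_left (by nlinarith)]; ring

lemma f_eq_of_c_le (hs : 0 < s) {x : ℝ} (hx : c s ≤ x) : f s x = -s * x + s := by
  have := mul_c hs.ne'
  unfold f; rw [min_eq_right (by nlinarith)]; ring

lemma f_eq_one_sub_mul_abs (hs : 0 < s) (x : ℝ) : f s x = 1 - s * |x - c s| := by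
  have := mul_c hs.ne'
  rcases le_total x (c s) with hx | hx
  · rw [f_eq_of_le_c hs hx, abs_of_nonpos (sub_nonpos.2 hx)]; linarith
  · rw [f_eq_of_c_le hs hx, abs_of_nonneg (sub_nonneg.2 hx)]; linarith

lemma f_le_one (hs : 0 < s) (x : ℝ) : f s x ≤ 1 := by
  rw [f_eq_one_sub_mul_abs hs]; nlinarith [abs_nonneg (x - c s)]

lemma f_c_eq_one (hs : 0 < s) : f s (c s) = 1 := by
  simp [f_eq_one_sub_mul_abs hs]

lemma continuous_f : Continuous (f s) := by
  unfold f; fun_prop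

lemma finite_preimage_singleton_f (hs : 0 < s) (y : ℝ) : (f s ⁻¹' {y}).Finite := by
  refine ((Set.finite_singleton (c s + (1 - y) / s)).insert (c s - (1 - y) / s)).subset ?_
  intro x hx
  have habs : |x - c s| = (1 - y) / s := by
    rw [mem_preimage, mem_singleton_iff, f_eq_one_sub_mul_abs hs] at hx
    field_simp; linarith
  rcases (abs_eq (habs ▸ abs_nonneg _)).1 habs with h | h
  · right; rw [mem_singleton_iff]; linarith
  · left; linarith

lemma finite_setOf_iterate_eq_c (hs : 0 < s) (m : ℕ) :
    {x | ∃ j < m, (f s)^[j] x = c s}.Finite := by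
  have hfin : ∀ j, ((f s)^[j] ⁻¹' {c s}).Finite := by
    intro j
    induction j with
    | zero => exact Set.finite_singleton _
    | succ j ih =>
      rw [Function.iterate_succ, preimage_comp]
      exact ih.preimage' fun y _ => finite_preimage_singleton_f hs y
  refine ((Finset.range m).finite_toSet.biUnion fun j _ => hfin j).subset ?_
  rintro x ⟨j, hj, hx⟩
  exact mem_biUnion (Finset.mem_range.2 hj) hx

lemma exists_homeomorph_eqOn_f (hs : 0 < s) {L : Set ℝ}
    (hL : L ⊆ Iic (c s) ∨ L ⊆ Ici (c s)) :
    ∃ g : ℝ ≃ₜ ℝ, EqOn (f s) g L := by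
  rcases hL with hL | hL
  · exact ⟨affineHomeomorph s (2 - s) hs.ne', fun x hx => f_eq_of_le_c hs (hL hx)⟩
  · exact ⟨affineHomeomorph (-s) s (neg_ne_zero.2 hs.ne'), fun x hx => f_eq_of_c_le hs (hL hx)⟩

lemma exists_homeomorph_eqOn_iterate (hs : 0 < s) {K : Set ℝ} (hK : K.OrdConnected) (m : ℕ)
    (hturn : ∀ x ∈ interior K, ∀ j < m, (f s)^[j] x ≠ c s) :
    ∃ g : ℝ ≃ₜ ℝ, EqOn (f s)^[m] g K := by
  induction m with
  | zero => exact ⟨Homeomorph.refl ℝ, fun _ _ => rfl⟩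
  | succ m ih =>
    obtain ⟨g, hg⟩ := ih fun x hx j hj => hturn x hx j (by omega)
    have hside : (f s)^[m] '' K ⊆ Iic (c s) ∨ (f s)^[m] '' K ⊆ Ici (c s) := by
      by_contra h
      simp only [not_or, not_subset, mem_Iic, mem_Ici, not_le] at h
      obtain ⟨⟨_, ⟨b, hb, rfl⟩, hbc⟩, ⟨_, ⟨a, ha, rfl⟩, hac⟩⟩ := h
      obtain ⟨x, hx, hxc⟩ := intermediate_value_uIcc
        ((continuous_f.iterate m).continuousOn (s := uIcc a b)) (mem_uIcc_of_le hac.le hbc.le)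
      have hxa : x ≠ a := by rintro rfl; exact hac.ne hxc
      have hxb : x ≠ b := by rintro rfl; exact hbc.ne' hxc
      have hx' : x ∈ interior K := by
        refine interior_mono (hK.uIcc_subset ha hb) ?_
        rcases le_total a b with hab | hab
        · rw [uIcc_of_le hab] at hx ⊢
          rw [interior_Icc]
          exact ⟨hx.1.lt_of_ne' hxa, hx.2.lt_of_ne hxb⟩
        · rw [uIcc_of_ge hab] at hx ⊢
          rw [interior_Icc]
          exact ⟨hx.1.lt_of_ne' hxb, hx.2.lt_of_ne hxa⟩
      exact hturn x hx' m (by omega) hxc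
    obtain ⟨h, hh⟩ := exists_homeomorph_eqOn_f hs hside
    refine ⟨g.trans h, fun x hx => ?_⟩
    rw [Function.iterate_succ_apply', Homeomorph.trans_apply, hh (mem_image_of_mem _ hx), hg hx]

/-- `f^[j+1]` attains its maximum `1` at `t`, so it is not monotone on `[u, w]`. -/
lemma not_injOn_iterate (hs : 0 < s) {Q : Set ℝ} (hQ : Q.OrdConnected) {u t w : ℝ}
    (hu : u ∈ Q) (hw : w ∈ Q) (hut : u < t) (htw : t < w) {j m : ℕ} (hjm : j < m)
    (ht : (f s)^[j] t = c s) : ¬ InjOn (f s)^[m] Q := by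
  intro hinj
  have hsplit : (f s)^[m] = (f s)^[m - (j + 1)] ∘ (f s)^[j + 1] := by
    rw [← Function.iterate_add]; congr 1; omega
  have hinj' : InjOn (f s)^[j + 1] (Icc u w) :=
    (hsplit ▸ hinj).of_comp.mono (hQ.out hu hw)
  have hmax : ∀ x, (f s)^[j + 1] x ≤ (f s)^[j + 1] t := by
    intro x
    rw [Function.iterate_succ_apply', Function.iterate_succ_apply', ht, f_c_eq_one hs]
    exact f_le_one hs _
  rcases ((continuous_f.iterate (j + 1)).continuousOn).strictMonoOn_of_injOn_Icc'
    (hut.trans htw).le hinj' with hmono | hanti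
  · exact (hmono ⟨hut.le, htw.le⟩ ⟨(hut.trans htw).le, le_rfl⟩ htw).not_ge (hmax w)
  · exact (hanti ⟨le_rfl, (hut.trans htw).le⟩ ⟨hut.le, htw.le⟩ hut).not_ge (hmax u)

end TentMap

section FlatArcs

variable {s : ℝ}

lemma coord_zero_eq_iterate (x : Ihat s) (m : ℕ) : x.1 0 = (f s)^[m] (x.1 m) := by
  induction m with
  | zero => rfl
  | succ m ih => rw [ih, Function.iterate_succ_apply, x.2.2 m]

lemma continuous_coord (m : ℕ) : Continuous fun x : Ihat s => x.1 m :=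
  (continuous_apply m).comp continuous_subtype_val

namespace MFlatOver

variable {m : ℕ} {γ : Set (Ihat s)} {J : Set ℝ}

lemma injOn_coord (h : MFlatOver s m γ J) : InjOn (fun x : Ihat s => x.1 m) γ := by
  obtain ⟨-, -, -, e, he⟩ := h
  intro x hx y hy hxy
  have : e ⟨x, hx⟩ = e ⟨y, hy⟩ := Subtype.ext (by rw [he, he]; exact hxy)
  exact congrArg Subtype.val (e.injective this)

lemma image_coord (h : MFlatOver s m γ J) : (fun x : Ihat s => x.1 m) '' γ = J := by
  obtain ⟨-, -, -, e, he⟩ := h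
  ext y
  refine ⟨?_, fun hy => ⟨(e.symm ⟨y, hy⟩).1, (e.symm ⟨y, hy⟩).2, ?_⟩⟩
  · rintro ⟨x, hx, rfl⟩
    simpa only [he] using (e ⟨x, hx⟩).2
  · simp only [← he, e.apply_symm_apply]

lemma isPreconnected (h : MFlatOver s m γ J) : IsPreconnected γ := by
  obtain ⟨-, hJ, -, e, -⟩ := h
  have := Subtype.preconnectedSpace hJ.isPreconnected
  rw [← Subtype.range_coe (s := γ), ← e.symm.surjective.range_comp]
  exact isPreconnected_range (continuous_subtype_val.comp e.symm.continuous)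

lemma ordConnected_image_coord (h : MFlatOver s m γ J) (k : ℕ) :
    ((fun x : Ihat s => x.1 k) '' γ).OrdConnected :=
  (h.isPreconnected.image _ (continuous_coord k).continuousOn).ordConnected

/-- `π₀ = f^m ∘ π_m` is injective on a `0`-flat arc. -/
lemma injOn_iterate_image_coord (h : MFlatOver s 0 γ J) (m : ℕ) :
    InjOn (f s)^[m] ((fun x : Ihat s => x.1 m) '' γ) := by
  rintro _ ⟨x, hx, rfl⟩ _ ⟨y, hy, rfl⟩ hxy
  simp only [← coord_zero_eq_iterate] at hxy
  rw [h.injOn_coord hx hy hxy]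

lemma restrict (h : MFlatOver s m γ J) {K : Set ℝ} (hK : K.OrdConnected)
    (hJK : (J ∩ K).Nontrivial) : MFlatOver s m {x ∈ γ | x.1 m ∈ K} (J ∩ K) := by
  have himage := h.image_coord
  obtain ⟨hJI, hJ, -, e, he⟩ := h
  have hsymm : ∀ y : J, (e.symm y).1.1 m = y := fun y => by rw [← he, e.apply_symm_apply]
  refine ⟨inter_subset_left.trans hJI, hJ.inter hK, hJK, {
    toFun := fun x => ⟨x.1.1 m, himage.subset (mem_image_of_mem _ x.2.1), x.2.2⟩
    invFun := fun y => ⟨e.symm ⟨y, y.2.1⟩, (e.symm _).2, (hsymm _).symm ▸ y.2.2⟩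
    left_inv := fun x => ?_
    right_inv := fun y => Subtype.ext (hsymm _)
    continuous_toFun := ((continuous_coord m).comp continuous_subtype_val).subtype_mk _
    continuous_invFun := (continuous_subtype_val.comp (e.symm.continuous.comp
      (continuous_subtype_val.subtype_mk _))).subtype_mk _ }, fun _ => rfl⟩
  apply Subtype.ext
  change (e.symm ⟨x.1.1 m, _⟩).1 = x.1
  rw [show (⟨x.1.1 m, _⟩ : J) = e ⟨x.1, x.2.1⟩ from Subtype.ext (he ⟨x.1, x.2.1⟩).symm,
    e.symm_apply_apply]

lemma zeroFlat_of_eqOn (h : MFlatOver s m γ J) {g : ℝ ≃ₜ ℝ} (hg : EqOn (f s)^[m] g J) :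
    MFlatOver s 0 γ (g '' J) := by
  have himage := h.image_coord
  have hcoord : ∀ x ∈ γ, x.1 0 = g (x.1 m) := fun x hx =>
    (coord_zero_eq_iterate x m).trans (hg (himage.subset (mem_image_of_mem _ hx)))
  obtain ⟨-, hJ, hJn, e, he⟩ := h
  refine ⟨?_, (hJ.isPreconnected.image g g.continuous.continuousOn).ordConnected,
    hJn.image g.injective, e.trans (g.image J), fun x => ?_⟩
  · rintro _ ⟨y, hy, rfl⟩
    obtain ⟨x, hx, rfl⟩ := himage.symm.subset hy
    exact hcoord x hx ▸ x.2.1 0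
  · change g (e x) = x.1.1 0
    rw [he, hcoord x.1 x.2]

end MFlatOver

end FlatArcs

section Decomposition

variable {s : ℝ} {m : ℕ} {J : Set ℝ}

lemma MFlatOver.bddBelow {γ : Set (Ihat s)} (h : MFlatOver s m γ J) : BddBelow J :=
  ⟨0, fun _ hx => (h.1 hx).1⟩

lemma MFlatOver.bddAbove {γ : Set (Ihat s)} (h : MFlatOver s m γ J) : BddAbove J :=
  ⟨1, fun _ hx => (h.1 hx).2⟩

lemma MFlatOver.sInf_lt_sSup {γ : Set (Ihat s)} (h : MFlatOver s m γ J) : sInf J < sSup J := by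
  obtain ⟨x, hx, y, hy, hxy⟩ := h.2.2.1
  rcases hxy.lt_or_gt with hxy | hxy
  · exact (csInf_le h.bddBelow hx).trans_lt (hxy.trans_le (le_csSup h.bddAbove hy))
  · exact (csInf_le h.bddBelow hy).trans_lt (hxy.trans_le (le_csSup h.bddAbove hx))

lemma MFlatOver.subset_Icc {γ : Set (Ihat s)} (h : MFlatOver s m γ J) :
    J ⊆ Icc (sInf J) (sSup J) :=
  subset_Icc_csInf_csSup h.bddBelow h.bddAbove

lemma MFlatOver.Ioo_subset {γ : Set (Ihat s)} (h : MFlatOver s m γ J) :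
    Ioo (sInf J) (sSup J) ⊆ J :=
  IsConnected.Ioo_csInf_csSup_subset ⟨h.2.2.1.nonempty, h.2.1.isPreconnected⟩
    h.bddBelow h.bddAbove

def turningPoints (s : ℝ) (m : ℕ) (J : Set ℝ) : Set ℝ :=
  {t ∈ Ioo (sInf J) (sSup J) | ∃ j < m, (f s)^[j] t = c s}

structure Breakpoints (s : ℝ) (m : ℕ) (J : Set ℝ) where
  M : ℤ
  M_pos : 0 < M
  b : ℤ → ℝ
  strictMonoOn : StrictMonoOn b (Icc 0 M)
  b_zero : b 0 = sInf J
  b_M : b M = sSup J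
  image_Ioo : b '' Ioo 0 M = turningPoints s m J

lemma exists_breakpoints (hs : 0 < s) {γ : Set (Ihat s)} (h : MFlatOver s m γ J) :
    Nonempty (Breakpoints s m J) := by
  obtain ⟨M, hM, b, hb, hb0, hbM, hbT⟩ := exists_strictMonoOn_enumeration
    ((finite_setOf_iterate_eq_c hs m).subset fun _ ht => ht.2) h.sInf_lt_sSup (sep_subset _ _)
  exact ⟨⟨M, hM, b, hb, hb0, hbM, hbT⟩⟩

namespace Breakpoints

variable (P : Breakpoints s m J) {i : ℤ}

lemma b_lt_b_add_one (hi : i ∈ Ico 0 P.M) : P.b i < P.b (i + 1) :=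
  P.strictMonoOn ⟨hi.1, hi.2.le⟩ ⟨by linarith [hi.1], hi.2⟩ (lt_add_one i)

lemma Ioo_subset (hi : i ∈ Ico 0 P.M) :
    Ioo (P.b i) (P.b (i + 1)) ⊆ Ioo (sInf J) (sSup J) := by
  rw [← P.b_zero, ← P.b_M]
  exact Ioo_subset_Ioo (P.strictMonoOn.monotoneOn ⟨le_rfl, P.M_pos.le⟩ ⟨hi.1, hi.2.le⟩ hi.1)
    (P.strictMonoOn.monotoneOn ⟨by linarith [hi.1], hi.2⟩ ⟨P.M_pos.le, le_rfl⟩ hi.2)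

lemma mem_turningPoints {k : ℤ} (hk : k ∈ Ioo 0 P.M) : P.b k ∈ turningPoints s m J :=
  P.image_Ioo ▸ mem_image_of_mem P.b hk

lemma iterate_ne_c (hi : i ∈ Ico 0 P.M) {x : ℝ} (hx : x ∈ Ioo (P.b i) (P.b (i + 1))) :
    ∀ j < m, (f s)^[j] x ≠ c s := by
  intro j hj hjx
  have hxT : x ∈ turningPoints s m J := ⟨P.Ioo_subset hi hx, j, hj, hjx⟩
  rw [← P.image_Ioo] at hxT
  obtain ⟨k, hk, rfl⟩ := hxT
  have hIcc : ∀ {l}, l ∈ Ioo 0 P.M → l ∈ Icc 0 P.M := fun hl => Ioo_subset_Icc_self hl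
  have h1 := (P.strictMonoOn.lt_iff_lt ⟨hi.1, hi.2.le⟩ (hIcc hk)).1 hx.1
  have h2 := (P.strictMonoOn.lt_iff_lt (hIcc hk) ⟨by linarith [hi.1], hi.2⟩).1 hx.2
  omega

def piece (γ : Set (Ihat s)) (i : ℤ) : Set (Ihat s) :=
  {x ∈ γ | x.1 m ∈ Icc (P.b i) (P.b (i + 1))}

variable {γ : Set (Ihat s)}

lemma isMFlat_piece (hs : 0 < s) (hγ : MFlatOver s m γ J) (hi : i ∈ Ico 0 P.M) :
    IsMFlat s 0 (P.piece γ i) := by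
  have hIoo : Ioo (P.b i) (P.b (i + 1)) ⊆ J ∩ Icc (P.b i) (P.b (i + 1)) := fun x hx =>
    ⟨hγ.Ioo_subset (P.Ioo_subset hi hx), Ioo_subset_Icc_self hx⟩
  obtain ⟨g, hg⟩ := exists_homeomorph_eqOn_iterate hs (hγ.2.1.inter ordConnected_Icc) m
    fun x hx => P.iterate_ne_c hi (by
      simpa only [interior_Icc] using interior_mono inter_subset_right hx)
  exact ⟨_, (hγ.restrict ordConnected_Icc
    ((Ioo_infinite (P.b_lt_b_add_one hi)).nontrivial.mono hIoo)).zeroFlat_of_eqOn hg⟩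

lemma piece_inter_piece_add_one (hγ : MFlatOver s m γ J) (hi : i ∈ Ico 0 P.M)
    (hi' : i + 1 ∈ Ico 0 P.M) : ∃ z, P.piece γ i ∩ P.piece γ (i + 1) = {z} := by
  have hbJ : P.b (i + 1) ∈ J :=
    hγ.Ioo_subset (P.mem_turningPoints ⟨by linarith [hi.1], hi'.2⟩).1
  obtain ⟨z, hz, hzb : z.1 m = P.b (i + 1)⟩ := hγ.image_coord.symm.subset hbJ
  refine ⟨z, Subset.antisymm (fun x hx => ?_) ?_⟩
  · exact hγ.injOn_coord hx.1.1 hz ((le_antisymm hx.1.2.2 hx.2.2.1).trans hzb.symm)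
  · rintro _ rfl
    refine ⟨⟨hz, ?_⟩, ⟨hz, ?_⟩⟩ <;> rw [hzb]
    exacts [⟨(P.b_lt_b_add_one hi).le, le_rfl⟩, ⟨le_rfl, (P.b_lt_b_add_one hi').le⟩]

lemma piece_inter_piece_eq_empty {j : ℤ} (hi : i ∈ Ico 0 P.M) (hj : j ∈ Ico 0 P.M)
    (hij : i + 1 < j) : P.piece γ i ∩ P.piece γ j = ∅ := by
  have hlt : P.b (i + 1) < P.b j :=
    P.strictMonoOn ⟨by linarith [hi.1], by linarith [hj.2]⟩ ⟨hj.1, hj.2.le⟩ hij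
  exact eq_empty_of_forall_notMem fun _ ⟨⟨_, _, hx⟩, ⟨_, hx', _⟩⟩ =>
    (hx.trans_lt hlt).not_ge hx'

lemma subset_Icc (hγ : MFlatOver s m γ J) : J ⊆ Icc (P.b 0) (P.b P.M) := by
  rw [P.b_zero, P.b_M]
  exact hγ.subset_Icc

lemma iUnion_piece (hγ : MFlatOver s m γ J) : ⋃ i ∈ Ico 0 P.M, P.piece γ i = γ := by
  refine Subset.antisymm (iUnion₂_subset fun i _ => sep_subset _ _) fun x hx => ?_
  have hxJ : x.1 m ∈ J := hγ.image_coord.subset (mem_image_of_mem _ hx)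
  obtain ⟨i, hi, hxi⟩ := exists_mem_Ico_subset_Icc P.M_pos
    (singleton_subset_iff.2 (P.subset_Icc hγ hxJ))
    fun _ _ u hu w hw hub hbw => by
      rw [mem_singleton_iff] at hu hw
      exact lt_asymm hub (hu ▸ hw ▸ hbw)
  exact mem_biUnion hi ⟨hx, hxi rfl⟩

def toZeroFlatDecomp (hs : 0 < s) (hγ : MFlatOver s m γ J) : ZeroFlatDecomp s γ where
  D := Ico 0 P.M
  ordConn := ordConnected_Ico
  nonemptyD := ⟨0, le_rfl, P.M_pos⟩
  piece := P.piece γ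
  flat _ hi := P.isMFlat_piece hs hγ hi
  union := (P.iUnion_piece hγ).symm
  node _ hi hi' := P.piece_inter_piece_add_one hγ hi hi'
  disj i hi j hj hij := by
    rcases lt_abs.1 hij with hij | hij
    · rw [inter_comm]; exact P.piece_inter_piece_eq_empty hj hi (by linarith)
    · exact P.piece_inter_piece_eq_empty hi hj (by linarith)

lemma efficient_toZeroFlatDecomp (hs : 0 < s) (hγ : MFlatOver s m γ J) :
    (P.toZeroFlatDecomp hs hγ).Efficient := by
  rintro γ' hsub ⟨J', hγ'⟩
  obtain ⟨i, hi, hQ⟩ := exists_mem_Ico_subset_Icc P.M_pos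
    ((image_mono hsub).trans (hγ.image_coord.subset.trans (P.subset_Icc hγ)))
    fun k hk u hu w hw hub hbw => by
      obtain ⟨-, j, hj, hjc⟩ := P.mem_turningPoints hk
      exact not_injOn_iterate hs (hγ'.ordConnected_image_coord m) hu hw hub hbw hj hjc
        (hγ'.injOn_iterate_image_coord m)
  exact ⟨i, hi, fun x hx => ⟨hsub hx, hQ (mem_image_of_mem _ hx)⟩⟩

end Breakpoints

end Decomposition

theorem flat_arc_finite_efficient_decomposition_general (s : ℝ)
    (hs₁ : Real.sqrt 2 < s)
    (γ : Set (Ihat s)) (hγ : IsFlat s γ) :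
    ∃ Δ : ZeroFlatDecomp s γ, Δ.D.Finite ∧ Δ.Efficient := by
  have hs : 0 < s := (Real.sqrt_nonneg 2).trans_lt hs₁
  obtain ⟨m, J, hγJ⟩ := hγ
  obtain ⟨P⟩ := exists_breakpoints hs hγJ
  exact ⟨P.toZeroFlatDecomp hs hγJ, finite_Ico _ _, P.efficient_toZeroFlatDecomp hs hγJ⟩

/-- every flat arc has a finite efficient `0`-flat decomposition. -/
theorem flat_arc_finite_efficient_decomposition (s : ℝ)
    (hs₁ : Real.sqrt 2 < s) (hs₂ : s < 2)
    (γ : Set (Ihat s)) (hγ : IsFlat s γ) :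
    ∃ Δ : ZeroFlatDecomp s γ, Δ.D.Finite ∧ Δ.Efficient :=
  flat_arc_finite_efficient_decomposition_general s hs₁ γ hγ

end Tent
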